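/- With positions as in the previous factorization lemma, suppose additionally d_i ≥ Σ_{j<i}(m_j − 1) d_j + δ for all i, where δ > 0 and all d_j > 0. Then the positions x[m] are strictly increasing in m (under the mixed-radix ordering) with consecutive spacing x[m] − x[m−1] ≥ δ for all 2 ≤ m ≤ M. -/

import Mathlib

/-!
Split off the least significant digit: `value u = u₀ + m₀ * value (tail u)`. Adding one to the
value either increments `u₀` and fixes the tail, which moves the position by `d₀ ≥ δ`, or carries:
`u₀` drops from `m₀ - 1` to `0` and the tail's value goes up by one. The tail satisfies the spacing
hypothesis with `δ + (m₀ - 1) d₀` in place of `δ`, which exactly pays for the lost `(m₀ - 1) d₀`,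
so induction on the number of digits applies.
-/

open Finset

theorem Fin.Iio_zero {n : ℕ} : Iio (0 : Fin (n + 1)) = ∅ := by
  ext; simp

@[to_additive]
theorem Fin.prod_Iio_succ {M : Type*} [CommMonoid M] {n : ℕ} (f : Fin (n + 1) → M) (i : Fin n) :
    ∏ j ∈ Iio i.succ, f j = f 0 * ∏ j ∈ Iio i, f j.succ := by
  have : Iio i.succ = insert 0 (Ioo 0 i.succ) := by
    rw [Ioo_insert_left i.succ_pos]; ext; simp
  rw [this, prod_insert (by simp), ← Fin.map_succEmb_Iio, prod_map]
  rfl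

def mixedRadixValue {I : ℕ} (m : Fin I → ℕ) (u : ∀ i, Fin (m i)) : ℕ :=
  ∑ i, (u i : ℕ) * ∏ j ∈ Iio i, m j

theorem mixedRadixValue_succ {I : ℕ} (m : Fin (I + 1) → ℕ) (u : ∀ i, Fin (m i)) :
    mixedRadixValue m u =
      u 0 + m 0 * mixedRadixValue (fun i => m i.succ) (fun i => u i.succ) := by
  simp only [mixedRadixValue, Fin.sum_univ_succ, Fin.prod_Iio_succ, mul_sum, Fin.Iio_zero,
    prod_empty]
  simp [mul_left_comm]

theorem Nat.eq_and_eq_of_add_mul_eq {m a b s t : ℕ} (ha : a < m) (hb : b < m)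
    (h : a + m * s = b + m * t) : a = b ∧ s = t := by
  have hm : 0 < m := by omega
  obtain ⟨hs, ha'⟩ := (Nat.div_mod_unique hm).2 ⟨h, ha⟩
  obtain ⟨ht, hb'⟩ := (Nat.div_mod_unique hm).2 ⟨rfl, hb⟩
  exact ⟨ha'.symm.trans hb', hs.symm.trans ht⟩

theorem mixedRadixValue_injective {I : ℕ} (m : Fin I → ℕ) :
    Function.Injective (mixedRadixValue m) := by
  induction I with
  | zero => intro u v _; funext i; exact i.elim0
  | succ I ih =>
    intro u v h
    rw [mixedRadixValue_succ, mixedRadixValue_succ] at h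
    obtain ⟨h0, htail⟩ := Nat.eq_and_eq_of_add_mul_eq (u 0).isLt (v 0).isLt h
    have htail_eq := congrFun (ih _ htail)
    funext i
    exact Fin.cases (Fin.ext h0) htail_eq i

theorem Nat.add_mul_eq_add_mul_add_one {m a a' s s' : ℕ} (ha : a < m) (ha' : a' < m)
    (h : a' + m * s' = a + m * s + 1) :
    (a' = a + 1 ∧ s' = s) ∨ (a' = 0 ∧ a + 1 = m ∧ s' = s + 1) := by
  rcases (show a + 1 ≤ m from ha).lt_or_eq with hlt | heq
  · left
    exact Nat.eq_and_eq_of_add_mul_eq ha' hlt (by rw [h]; ring)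
  · right
    obtain ⟨h0, hs⟩ := Nat.eq_and_eq_of_add_mul_eq (t := s + 1) ha' (by omega : 0 < m)
      (by rw [h, ← heq]; ring)
    exact ⟨h0, heq, hs⟩

theorem sum_digit_mul_add_le_of_mixedRadixValue_eq_succ {I : ℕ} (m : Fin I → ℕ) (d : Fin I → ℝ)
    (δ : ℝ) (hd : ∀ i, (∑ j ∈ Iio i, ((m j : ℝ) - 1) * d j) + δ ≤ d i)
    {u u' : ∀ i, Fin (m i)} (h : mixedRadixValue m u' = mixedRadixValue m u + 1) :
    (∑ i, ((u i : ℕ) : ℝ) * d i) + δ ≤ ∑ i, ((u' i : ℕ) : ℝ) * d i := by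
  induction I generalizing δ with
  | zero => simp [mixedRadixValue] at h
  | succ I ih =>
    rw [mixedRadixValue_succ, mixedRadixValue_succ] at h
    rw [Fin.sum_univ_succ, Fin.sum_univ_succ]
    rcases Nat.add_mul_eq_add_mul_add_one (u 0).isLt (u' 0).isLt h with
      ⟨h0, htail⟩ | ⟨h0, hcarry, htail⟩
    · have hd0 : δ ≤ d 0 := by simpa [Fin.Iio_zero] using hd 0
      have htail_eq := congrFun (mixedRadixValue_injective _ htail)
      simp only [htail_eq, h0]
      push_cast
      linarith
    · have hd' : ∀ i : Fin I, (∑ j ∈ Iio i, ((m j.succ : ℝ) - 1) * d j.succ) +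
          (δ + ((m 0 : ℝ) - 1) * d 0) ≤ d i.succ := by
        intro i
        have := hd i.succ
        rw [Fin.sum_Iio_succ] at this
        linarith
      have hcarry : ((u 0 : ℕ) : ℝ) = m 0 - 1 := eq_sub_of_add_eq (by exact_mod_cast hcarry)
      have htail_spacing := ih _ _ _ hd' htail
      rw [h0, hcarry, Nat.cast_zero]
      linarith

theorem mixed_radix_min_spacing_general (I : ℕ) (mfac : Fin I → ℕ)
    (d : Fin I → ℝ) (δ : ℝ)
    (hdi : ∀ i : Fin I,
      d i ≥ (∑ j ∈ Finset.Iio i, ((mfac j : ℝ) - 1) * d j) + δ)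
    (u u' : (i : Fin I) → Fin (mfac i))
    (hcons : (∑ i : Fin I, (u' i : ℕ) * ∏ j ∈ Finset.Iio i, mfac j) =
      (∑ i : Fin I, (u i : ℕ) * ∏ j ∈ Finset.Iio i, mfac j) + 1) :
    (∑ i : Fin I, ((u' i : ℕ) : ℝ) * d i) ≥
      (∑ i : Fin I, ((u i : ℕ) : ℝ) * d i) + δ :=
  sum_digit_mul_add_le_of_mixedRadixValue_eq_succ mfac d δ hdi hcons

/-- Minimum spacing of the mixed-radix position construction: if
    d_i ≥ Σ_{j<i}(m_j − 1)d_j + δ with δ > 0 and d_j > 0, then positions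
    x = Σ_i u_i d_i are strictly increasing along the mixed-radix ordering of
    the digit vectors, with consecutive spacing at least δ. -/
theorem mixed_radix_min_spacing (I : ℕ) (mfac : Fin I → ℕ)
    (hm : ∀ i, 2 ≤ mfac i) (d : Fin I → ℝ) (δ : ℝ) (hδ : 0 < δ)
    (hdpos : ∀ i, 0 < d i)
    (hdi : ∀ i : Fin I,
      d i ≥ (∑ j ∈ Finset.Iio i, ((mfac j : ℝ) - 1) * d j) + δ)
    (u u' : (i : Fin I) → Fin (mfac i))
    (hcons : (∑ i : Fin I, (u' i : ℕ) * ∏ j ∈ Finset.Iio i, mfac j) =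
      (∑ i : Fin I, (u i : ℕ) * ∏ j ∈ Finset.Iio i, mfac j) + 1) :
    (∑ i : Fin I, ((u' i : ℕ) : ℝ) * d i) ≥
      (∑ i : Fin I, ((u i : ℕ) : ℝ) * d i) + δ :=
  mixed_radix_min_spacing_general I mfac d δ hdi u u' hcons
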